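/- In the problem -y''=λy on (0,1) with y'(0)=0 and 3λ·y(1)=(λ-3)·y'(1): λ=0 is an eigenvalue with eigenfunction y₀=1, first associated function y₁(x) = -x²/2 + C, and second associated function y₂(x) = x⁴/24 - C x²/2 + D (for any constants C, D), i.e., these functions satisfy -y₁''=y₀, -y₂''=y₁, y₀'(0)=y₁'(0)=y₂'(0)=0, 0·y₀(1)=-3y₀'(1), 0·y₁(1)+3y₀(1) = -3y₁'(1)+y₀'(1), and 0·y₂(1)+3y₁(1) = -3y₂'(1)+y₁'(1). Moreover Q₀ := ∫₀¹ y₁² dx - 9·( y₁(1)/(-3) - y₀(1)/9 )² = 1/45. -/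

import Mathlib

open MeasureTheory

lemma hd1 (C : ℝ) : deriv (fun x : ℝ => -x ^ 2 / 2 + C) = fun x => -x := by
  funext x
  have h : HasDerivAt (fun x : ℝ => -x ^ 2 / 2 + C) (-x) x := by
    have := (((hasDerivAt_pow 2 x).neg).div_const 2).add_const C
    exact this.congr_deriv (by push_cast; ring)
  exact h.deriv

lemma hd1' : deriv (fun x : ℝ => -x) = fun _ : ℝ => (-1 : ℝ) := by
  funext x
  exact ((hasDerivAt_id x).neg).deriv

lemma hd2 (C D : ℝ) : deriv (fun x : ℝ => x ^ 4 / 24 - C * x ^ 2 / 2 + D)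
    = fun x => x ^ 3 / 6 - C * x := by
  funext x
  have h : HasDerivAt (fun x : ℝ => x ^ 4 / 24 - C * x ^ 2 / 2 + D)
      (x ^ 3 / 6 - C * x) x := by
    have := (((hasDerivAt_pow 4 x).div_const 24).sub
      (((hasDerivAt_pow 2 x).const_mul C).div_const 2)).add_const D
    exact this.congr_deriv (by push_cast; ring)
  exact h.deriv

lemma hd2' (C : ℝ) : deriv (fun x : ℝ => x ^ 3 / 6 - C * x) = fun x => x ^ 2 / 2 - C := by
  funext x
  have h : HasDerivAt (fun x : ℝ => x ^ 3 / 6 - C * x) (x ^ 2 / 2 - C) x := by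
    have := ((hasDerivAt_pow 3 x).div_const 6).sub ((hasDerivAt_id x).const_mul C)
    exact this.congr_deriv (by push_cast; ring)
  exact h.deriv

lemma intq (C : ℝ) : (∫ x in (0:ℝ)..1, (-x ^ 2 / 2 + C) ^ 2) = 1/20 - C/3 + C ^ 2 := by
  have h : ∀ x : ℝ, (-x ^ 2 / 2 + C) ^ 2 = x ^ 4 / 4 - C * x ^ 2 + C ^ 2 := by
    intro x; ring
  simp_rw [h]
  rw [intervalIntegral.integral_add, intervalIntegral.integral_sub]
  · rw [intervalIntegral.integral_div, intervalIntegral.integral_const_mul,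
      integral_pow, integral_pow, intervalIntegral.integral_const]
    norm_num; ring
  · exact ((continuous_pow 4).div_const 4).intervalIntegrable _ _
  · exact (continuous_const.mul (continuous_pow 2)).intervalIntegrable _ _
  · exact (((continuous_pow 4).div_const 4).sub
      (continuous_const.mul (continuous_pow 2))).intervalIntegrable _ _
  · exact continuous_const.intervalIntegrable _ _

theorem example_one_chain_and_Q (C D : ℝ) :
    let y0 : ℝ → ℝ := fun _ => 1
    let y1 : ℝ → ℝ := fun x => -x ^ 2 / 2 + C
    let y2 : ℝ → ℝ := fun x => x ^ 4 / 24 - C * x ^ 2 / 2 + D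
    (∀ x : ℝ, -(deriv (deriv y0) x) = 0 * y0 x) ∧
    (∀ x : ℝ, -(deriv (deriv y1) x) = y0 x) ∧
    (∀ x : ℝ, -(deriv (deriv y2) x) = y1 x) ∧
    deriv y0 0 = 0 ∧ deriv y1 0 = 0 ∧ deriv y2 0 = 0 ∧
    0 * y0 1 = -3 * deriv y0 1 ∧
    0 * y1 1 + 3 * y0 1 = -3 * deriv y1 1 + deriv y0 1 ∧
    0 * y2 1 + 3 * y1 1 = -3 * deriv y2 1 + deriv y1 1 ∧
    (∫ x in (0:ℝ)..1, (y1 x) ^ 2) - 9 * (y1 1 / (-3) - y0 1 / 9) ^ 2 = 1 / 45 := by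
  intro y0 y1 y2
  have e0 : deriv y0 = fun _ : ℝ => (0:ℝ) := by funext x; simp [y0]
  have e1 : deriv y1 = fun x => -x := hd1 C
  have e2 : deriv y2 = fun x => x ^ 3 / 6 - C * x := hd2 C D
  refine ⟨?_, ?_, ?_, ?_, ?_, ?_, ?_, ?_, ?_, ?_⟩
  · intro x; rw [e0]; simp [y0]
  · intro x; rw [e1, hd1']; simp [y0]
  · intro x; rw [e2, hd2' C]; simp [y1]; ring
  · rw [e0]
  · rw [e1]; simp
  · rw [e2]; norm_num
  · rw [e0]; simp [y0]
  · rw [e0, e1]; simp [y0, y1]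
  · rw [e1, e2]; simp [y1]; ring
  · rw [show (∫ x in (0:ℝ)..1, (y1 x) ^ 2) = 1/20 - C/3 + C ^ 2 from intq C]
    simp only [y0, y1]; ring
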